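/- arXiv:1709.04986 — 4 statements merged into one kernel-verified Lean document; each statement's English description precedes it below -/
import Mathlib

section
/- Let viable be the greatest fixed point of f. Let F : σ → Prop with viable ≤ F pointwise. Let Q : σ → ι → Prop be a region of validity for F, i.e., for all s and i with F s and A s i, Q s i holds iff there exists s' with G_T s i s' and F s'. Let W : σ → Prop be the violating region for F relative to Q, i.e., for all s with F s, W s holds iff there exists i with A s i and ¬Q s i. Then viable is contained in the refined predicate: for every state s, viable s implies F s ∧ ¬W s. -/
/-- The monotone operator on state predicates associated with an assume-guarantee contract:
`f V s := ∀ i, A s i → ∃ s', G_T s i s' ∧ V s'`. -/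
def agOp {σ ι : Type*} (A : σ → ι → Prop) (G_T : σ → ι → σ → Prop) :
    (σ → Prop) →o (σ → Prop) where
  toFun V := fun s => ∀ i, A s i → ∃ s', G_T s i s' ∧ V s'
  monotone' := by
    intro V V' h s hs i hi
    obtain ⟨s', hg, hv⟩ := hs i hi
    exact ⟨s', hg, h s' hv⟩

/-- The set of viable states: the greatest fixed point of `agOp A G_T`. -/
def viableOf {σ ι : Type*} (A : σ → ι → Prop) (G_T : σ → ι → σ → Prop) : σ → Prop :=
  OrderHom.gfp (agOp A G_T)

/-- Lemma (loop invariant, single step): if `viable ≤ F`, `Q` is a region of validity for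
`F`, and `W` is the violating region for `F` relative to `Q`, then every viable state lies
in the refined predicate `F ∧ ¬W`. -/
theorem viable_le_refined {σ ι : Type*}
    (A : σ → ι → Prop) (G_T : σ → ι → σ → Prop)
    (F : σ → Prop) (Q : σ → ι → Prop) (W : σ → Prop)
    (hAbove : ∀ s, viableOf A G_T s → F s)
    (hQ : ∀ s i, F s → A s i → (Q s i ↔ ∃ s', G_T s i s' ∧ F s'))
    (hW : ∀ s, F s → (W s ↔ ∃ i, A s i ∧ ¬ Q s i)) :
    ∀ s, viableOf A G_T s → F s ∧ ¬ W s := by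
  intro s hs
  have hfix : agOp A G_T (viableOf A G_T) = viableOf A G_T :=
    OrderHom.map_gfp (agOp A G_T)
  have hstep : ∀ i, A s i → ∃ s', G_T s i s' ∧ viableOf A G_T s' := by
    have := congrFun hfix s
    exact (congrFun hfix s).symm.mp hs
  have hF : F s := hAbove s hs
  refine ⟨hF, ?_⟩
  intro hWs
  obtain ⟨i, hAi, hnQ⟩ := (hW s hF).mp hWs
  obtain ⟨s', hg, hv⟩ := hstep i hAi
  exact hnQ ((hQ s i hF hAi).mpr ⟨s', hg, hAbove s' hv⟩)
end

section
/- Let viable be the greatest fixed point of f. Let F : ℕ → (σ → Prop) be a sequence of state predicates with F 0 s for every s (F 0 = true). Suppose for each n there are predicates Q n : σ → ι → Prop and W n : σ → Prop such that: (i) for all s and i with F n s and A s i, Q n s i holds iff there exists s' with G_T s i s' and F n s'; (ii) for all s with F n s, W n s holds iff there exists i with A s i and ¬(Q n s i); and (iii) for all s, F (n+1) s ↔ F n s ∧ ¬(W n s). Then for every n and every state s, viable s implies F n s. -/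
/-- Loop invariant of the validity-guided synthesis algorithm: starting from `F 0 = true`
and repeatedly removing the violating region `W n`, every viable state remains in `F n`. -/
theorem viable_le_loop_invariant {σ ι : Type*}
    (A : σ → ι → Prop) (G_T : σ → ι → σ → Prop)
    (F : ℕ → σ → Prop) (Q : ℕ → σ → ι → Prop) (W : ℕ → σ → Prop)
    (hInit : ∀ s, F 0 s)
    (hQ : ∀ n s i, F n s → A s i → (Q n s i ↔ ∃ s', G_T s i s' ∧ F n s'))
    (hW : ∀ n s, F n s → (W n s ↔ ∃ i, A s i ∧ ¬ Q n s i))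
    (hStep : ∀ n s, F (n + 1) s ↔ F n s ∧ ¬ W n s) :
    ∀ n s, viableOf A G_T s → F n s := by
  have hfix : agOp A G_T (viableOf A G_T) = viableOf A G_T :=
    OrderHom.map_gfp (agOp A G_T)
  intro n
  induction n with
  | zero => intro s _; exact hInit s
  | succ n ih =>
    intro s hv
    have hFn : F n s := ih s hv
    rw [hStep]
    refine ⟨hFn, ?_⟩
    intro hw
    obtain ⟨i, hA, hnQ⟩ := (hW n s hFn).mp hw
    have hstep : agOp A G_T (viableOf A G_T) s := by rw [hfix]; exact hv
    obtain ⟨s', hg, hv'⟩ := hstep i hA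
    exact hnQ ((hQ n s i hFn hA).mpr ⟨s', hg, ih s' hv'⟩)
end

section
/- Let F : σ → Prop. Let Q : σ → ι → Prop satisfy: for all s and i with F s and A s i, Q s i holds iff there exists s' with G_T s i s' and F s'. Let W : σ → Prop satisfy: for all s with F s, W s holds iff there exists i with A s i and ¬(Q s i). Suppose the validity check fails, i.e., there exist s and i with F s, A s i, and no s' with G_T s i s' and F s'. Then the intersection of F and W is nonempty: there exists a state s with F s and W s. -/
/-- Progress lemma: if the validity check fails (some `s, i` with `F s`, `A s i`, and no
successor in `F`), then the intersection of `F` and the violating region `W` is nonempty. -/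
theorem progress_F_inter_W_nonempty {σ ι : Type*}
    (A : σ → ι → Prop) (G_T : σ → ι → σ → Prop)
    (F : σ → Prop) (Q : σ → ι → Prop) (W : σ → Prop)
    (hQ : ∀ s i, F s → A s i → (Q s i ↔ ∃ s', G_T s i s' ∧ F s'))
    (hW : ∀ s, F s → (W s ↔ ∃ i, A s i ∧ ¬ Q s i))
    (hFail : ∃ s i, F s ∧ A s i ∧ ¬ ∃ s', G_T s i s' ∧ F s') :
    ∃ s, F s ∧ W s := by
  obtain ⟨s, i, hF, hA, hno⟩ := hFail
  exact ⟨s, hF, (hW s hF).mpr ⟨i, hA, fun hq => hno ((hQ s i hF hA).mp hq)⟩⟩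
end

section
/- Let viable be the greatest fixed point of f. Let F : ℕ → (σ → Prop) be a sequence of state predicates with F 0 s for every s, and suppose for each n there are Q n : σ → ι → Prop and W n : σ → Prop such that: (i) for all s and i with F n s and A s i, Q n s i holds iff there exists s' with G_T s i s' and F n s'; (ii) for all s with F n s, W n s holds iff there exists i with A s i and ¬(Q n s i); and (iii) for all s, F (n+1) s ↔ F n s ∧ ¬(W n s). If for some N the predicate F N is a post-fixed point of f (for all s with F N s and all i with A s i, there exists s' with G_T s i s' and F N s'), then F N = viable; consequently, there exists s with G_I s and F N s if and only if there exists s with G_I s and viable s. -/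
/-- Soundness of a terminating run of the validity-guided synthesis algorithm: if the
loop starting from `F 0 = true` (refining with violating regions `W n` of the regions of
validity `Q n`) reaches an `F N` that is a post-fixed point of `f`, then `F N = viable`,
and the algorithm's realizability check on `F N` is equivalent to realizability. -/
theorem terminating_run_sound {σ ι : Type*}
    (A : σ → ι → Prop) (G_I : σ → Prop) (G_T : σ → ι → σ → Prop)
    (F : ℕ → σ → Prop) (Q : ℕ → σ → ι → Prop) (W : ℕ → σ → Prop)
    (hInit : ∀ s, F 0 s)
    (hQ : ∀ n s i, F n s → A s i → (Q n s i ↔ ∃ s', G_T s i s' ∧ F n s'))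
    (hW : ∀ n s, F n s → (W n s ↔ ∃ i, A s i ∧ ¬ Q n s i))
    (hStep : ∀ n s, F (n + 1) s ↔ F n s ∧ ¬ W n s)
    (N : ℕ)
    (hPost : ∀ s, F N s → ∀ i, A s i → ∃ s', G_T s i s' ∧ F N s') :
    (∀ s, F N s ↔ viableOf A G_T s) ∧
      ((∃ s, G_I s ∧ F N s) ↔ ∃ s, G_I s ∧ viableOf A G_T s) := by
  have hle : ∀ s, F N s → viableOf A G_T s := by
    have : (F N : σ → Prop) ≤ (agOp A G_T) (F N) := fun s hs => hPost s hs
    have h2 := OrderHom.le_gfp (f := agOp A G_T) this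
    exact fun s hs => h2 s hs
  have hge : ∀ n s, viableOf A G_T s → F n s := by
    intro n
    induction n with
    | zero => exact fun s _ => hInit s
    | succ n ih =>
      intro s hv
      have hFn : F n s := ih s hv
      have hfv : (agOp A G_T) (viableOf A G_T) s := by
        show (agOp A G_T) (OrderHom.gfp (agOp A G_T)) s
        rw [OrderHom.map_gfp]; exact hv
      refine (hStep n s).2 ⟨hFn, ?_⟩
      intro hw
      obtain ⟨i, hA, hnQ⟩ := (hW n s hFn).1 hw
      apply hnQ
      obtain ⟨s', hg, hv'⟩ := hfv i hA
      exact (hQ n s i hFn hA).2 ⟨s', hg, ih s' hv'⟩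
  have hiff : ∀ s, F N s ↔ viableOf A G_T s := fun s => ⟨hle s, hge N s⟩
  exact ⟨hiff, ⟨fun ⟨s, h1, h2⟩ => ⟨s, h1, (hiff s).1 h2⟩,
    fun ⟨s, h1, h2⟩ => ⟨s, h1, (hiff s).2 h2⟩⟩⟩
end
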